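/- Let H and H' be Hopf algebras over a field k with bijective antipodes, τ a Hopf algebra automorphism of H of finite order r, and τ' a Hopf algebra automorphism of H' of finite order r'. Then γ = τ ⊗ τ' is a Hopf algebra automorphism of H ⊗ H' of order lcm(r, r'), and exp_γ(H ⊗ H') = lcm(d_τ, d_{τ'}) / lcm(r, r'), where d_τ = r·exp_τ(H) and d_{τ'} = r'·exp_{τ'}(H'). In particular, if r = r', then exp_γ(H ⊗ H') = lcm(exp_τ(H), exp_{τ'}(H')). -/

import Mathlib

open scoped TensorProduct

noncomputable section

namespace TwistedExponent

section Bialg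

variable (k H : Type*) [CommRing k] [Ring H] [Bialgebra k H]

/-- The convolution product of two linear endomorphisms of a bialgebra:
`f * g = μ ∘ (f ⊗ g) ∘ Δ`. -/
def conv (f g : H →ₗ[k] H) : H →ₗ[k] H :=
  LinearMap.mul' k H ∘ₗ TensorProduct.map f g ∘ₗ Coalgebra.comul

/-- The convolution unit `η ∘ ε`, i.e. `h ↦ ε(h)·1`. -/
def convOne : H →ₗ[k] H := Algebra.linearMap k H ∘ₗ Coalgebra.counit

/-- `gamma T m` is the map `Γ_m = μ^m ∘ (Id ⊗ T ⊗ T² ⊗ ⋯ ⊗ T^{m-1}) ∘ Δ^{m-1}`, expressed as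
the convolution product `Id * T * T² * ⋯ * T^{m-1}` (with `gamma T 0` the convolution unit). -/
def gamma (T : H →ₗ[k] H) : ℕ → (H →ₗ[k] H)
  | 0 => convOne k H
  | (m + 1) => conv k H (gamma T m) (T ^ m)

/-- `f : H → H` has exact (finite) order `r`. -/
def HasOrder (τ : H → H) (r : ℕ) : Prop :=
  0 < r ∧ τ^[r] = id ∧ ∀ s : ℕ, 0 < s → s < r → τ^[s] ≠ id

end Bialg

section Hopf

variable (k H : Type*) [CommRing k] [Ring H] [HopfAlgebra k H]

/-- The inverse of the antipode, given that the antipode is bijective. -/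
def antipodeInv (hS : Function.Bijective (HopfAlgebra.antipode (R := k) (A := H))) :
    H →ₗ[k] H :=
  (LinearEquiv.ofBijective (HopfAlgebra.antipode (R := k) (A := H)) hS).symm

/-- The map `S⁻² ∘ τ`. -/
def twist (hS : Function.Bijective (HopfAlgebra.antipode (R := k) (A := H)))
    (τ : H →ₗ[k] H) : H →ₗ[k] H :=
  antipodeInv k H hS ∘ₗ antipodeInv k H hS ∘ₗ τ

end Hopf

end TwistedExponent

open TwistedExponent

universe u

/-!
Since `S⁻¹` reverses products, `T = S⁻²τ` is an algebra map, and `Γ_{m+n} = Γ_m * (T^m ∘ Γ_n)`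
in the convolution algebra. Hence the set of `m` with `Γ_m = η ε` is closed under addition and
under subtraction, so it consists of the multiples of some `g > 0`, and
`r · exp_τ(H) = lcm(g, r)`. On `H ⊗ H'` the twist is `T ⊗ T'` and `Γ_m` is `Γ_m ⊗ Γ'_m`; slicing
with the counits shows that it is trivial iff both factors are, i.e. iff `lcm(g, g') ∣ m`, and the
exponent of the tensor product is read off from `lcm(g, g')` in the same way.
-/

theorem Nat.exists_pos_forall_iff_dvd {p : ℕ → Prop} (h0 : p 0)
    (hadd : ∀ m n, p m → (p (m + n) ↔ p n)) (hpos : ∃ m, 0 < m ∧ p m) :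
    ∃ g, 0 < g ∧ ∀ m, p m ↔ g ∣ m := by
  classical
  obtain ⟨hg, hpg⟩ := Nat.find_spec hpos
  have hmul : ∀ c, p (Nat.find hpos * c) := fun c => by
    induction c with
    | zero => simpa using h0
    | succ c ih => rwa [mul_add_one, add_comm, hadd _ _ hpg]
  refine ⟨Nat.find hpos, hg, fun m => ⟨fun hm => ?_, fun ⟨c, hc⟩ => hc ▸ hmul c⟩⟩
  have hmod : p (m % Nat.find hpos) := by
    rwa [← hadd _ _ (hmul (m / Nat.find hpos)), Nat.div_add_mod]
  by_contra hdvd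
  exact Nat.find_min hpos (Nat.mod_lt m hg)
    ⟨Nat.pos_of_ne_zero (mt Nat.dvd_of_mod_eq_zero hdvd), hmod⟩

theorem Nat.isLeast_lcm_div {g r : ℕ} (hg : 0 < g) (hr : 0 < r) :
    IsLeast {n | 0 < n ∧ g ∣ n * r} (Nat.lcm g r / r) := by
  have hlcm : Nat.lcm g r / r * r = Nat.lcm g r := Nat.div_mul_cancel (Nat.dvd_lcm_right g r)
  refine ⟨⟨Nat.div_pos (Nat.le_of_dvd (Nat.lcm_pos hg hr) (Nat.dvd_lcm_right g r)) hr,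
    by rw [hlcm]; exact Nat.dvd_lcm_left g r⟩, fun n ⟨hn, hgn⟩ => Nat.le_of_dvd hn ?_⟩
  rw [Nat.div_dvd_iff_dvd_mul (Nat.dvd_lcm_right g r) hr, mul_comm]
  exact Nat.lcm_dvd hgn (dvd_mul_left r n)

theorem Nat.mul_eq_lcm_of_isLeast {g r e : ℕ} (hg : 0 < g) (hr : 0 < r)
    (he : IsLeast {n | 0 < n ∧ g ∣ n * r} e) : r * e = Nat.lcm g r := by
  rw [he.unique (Nat.isLeast_lcm_div hg hr), Nat.mul_div_cancel' (Nat.dvd_lcm_right g r)]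

theorem Module.End.iterate_eq_id_iff {R M : Type*} [Semiring R] [AddCommMonoid M] [Module R M]
    (f : Module.End R M) (s : ℕ) : (⇑f)^[s] = id ↔ f ^ s = 1 := by
  rw [← Module.End.coe_pow, ← Module.End.coe_one (R := R), DFunLike.coe_fn_eq]

namespace TwistedExponent

open WithConv TensorProduct HopfAlgebra

theorem hasOrder_iff {α : Type*} {f : α → α} {r : ℕ} :
    HasOrder α f r ↔ 0 < r ∧ ∀ s, f^[s] = id ↔ r ∣ s := by
  refine ⟨fun ⟨hr, hid, hmin⟩ => ⟨hr, fun s => ⟨fun hs => ?_, fun ⟨c, hc⟩ => ?_⟩⟩,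
    fun ⟨hr, hdvd⟩ => ⟨hr, (hdvd r).2 dvd_rfl, fun s hs hsr hid =>
      absurd (Nat.le_of_dvd hs ((hdvd s).1 hid)) (not_le.2 hsr)⟩⟩
  · have hmod : f^[s] = f^[s % r] := by
      conv_lhs => rw [← Nat.mod_add_div s r]
      rw [Function.iterate_add, Function.iterate_mul, hid, Function.iterate_id,
        Function.comp_id]
    by_contra hrs
    exact hmin (s % r) (Nat.pos_of_ne_zero (mt Nat.dvd_of_mod_eq_zero hrs)) (Nat.mod_lt s hr)
      (hmod ▸ hs)
  · rw [hc, Function.iterate_mul, hid, Function.iterate_id]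

section Bialgebra

variable {k H : Type*} [CommRing k] [Ring H] [Bialgebra k H]

theorem toConv_conv (f g : H →ₗ[k] H) : toConv (conv k H f g) = toConv f * toConv g := rfl

theorem toConv_convOne : toConv (convOne k H) = 1 := rfl

theorem convOne_apply_one : convOne k H 1 = 1 := by
  simp [convOne]

theorem gamma_apply_one {T : H →ₗ[k] H} (hT : T 1 = 1) (m : ℕ) : gamma k H T m 1 = 1 := by
  induction m with
  | zero => exact convOne_apply_one
  | succ m ih =>
    simp [gamma, conv, ih, Algebra.TensorProduct.one_def, Module.End.pow_apply,
      Function.iterate_fixed hT]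

theorem toLinearMap_pow (T : H →ₐ[k] H) (m : ℕ) : (T ^ m).toLinearMap = T.toLinearMap ^ m :=
  map_pow AlgHom.toEnd T m

theorem algHom_comp_convOne (T : H →ₐ[k] H) :
    T.toLinearMap ∘ₗ convOne k H = convOne k H := by
  ext x
  simp [convOne]

theorem gamma_add (T : H →ₐ[k] H) (m n : ℕ) :
    toConv (gamma k H T.toLinearMap (m + n)) =
      toConv (gamma k H T.toLinearMap m) *
        toConv ((T ^ m).toLinearMap ∘ₗ gamma k H T.toLinearMap n) := by
  induction n with
  | zero => rw [Nat.add_zero, gamma, algHom_comp_convOne, toConv_convOne, mul_one]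
  | succ n ih =>
    rw [← Nat.add_assoc, gamma, toConv_conv, ih, gamma, mul_assoc, pow_add,
      Module.End.mul_eq_comp, ← toLinearMap_pow, ← toLinearMap_pow]
    congr 1
    exact congrArg toConv
      (LinearMap.algHom_comp_convMul_distrib (T ^ m) (toConv _) (toConv _)).symm

theorem gamma_add_eq_convOne_iff (T : H →ₐ[k] H) (hT : Function.Injective T) {m : ℕ}
    (hm : gamma k H T.toLinearMap m = convOne k H) (n : ℕ) :
    gamma k H T.toLinearMap (m + n) = convOne k H ↔ gamma k H T.toLinearMap n = convOne k H := by
  have hcomp :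
      gamma k H T.toLinearMap (m + n) = (T ^ m).toLinearMap ∘ₗ gamma k H T.toLinearMap n := by
    simpa [hm, toConv_convOne] using gamma_add T m n
  have hinj : Function.Injective (T ^ m) := by simpa using hT.iterate m
  rw [hcomp]
  nth_rw 1 [← algHom_comp_convOne (T ^ m)]
  exact LinearMap.cancel_left hinj

theorem exists_pos_forall_gamma_eq_convOne_iff_dvd (T : H →ₐ[k] H) (hT : Function.Injective T)
    (hpos : ∃ m, 0 < m ∧ gamma k H T.toLinearMap m = convOne k H) :
    ∃ g, 0 < g ∧ ∀ m, gamma k H T.toLinearMap m = convOne k H ↔ g ∣ m :=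
  Nat.exists_pos_forall_iff_dvd rfl (fun _ _ hm => gamma_add_eq_convOne_iff T hT hm _) hpos

end Bialgebra

section TensorProduct

variable {k H H' : Type*} [CommRing k] [Ring H] [Bialgebra k H] [Ring H'] [Bialgebra k H']

theorem map_convOne_convOne : map (convOne k H) (convOne k H') = convOne k (H ⊗[k] H') := by
  ext x y
  simp [convOne, Algebra.algebraMap_eq_smul_one, TensorProduct.smul_tmul', smul_smul, mul_comm,
    Algebra.TensorProduct.one_def]

theorem gamma_map (T : H →ₗ[k] H) (T' : H' →ₗ[k] H') (n : ℕ) :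
    gamma k (H ⊗[k] H') (map T T') n = map (gamma k H T n) (gamma k H' T' n) := by
  induction n with
  | zero => exact map_convOne_convOne.symm
  | succ n ih =>
    rw [gamma, ih, TensorProduct.map_pow]
    exact congrArg ofConv TensorProduct.map_convMul_map

theorem map_eq_map_iff {f f₀ : H →ₗ[k] H} {g g₀ : H' →ₗ[k] H'}
    (hf : f 1 = 1) (hf₀ : f₀ 1 = 1) (hg : g 1 = 1) (hg₀ : g₀ 1 = 1) :
    map f g = map f₀ g₀ ↔ f = f₀ ∧ g = g₀ := by
  refine ⟨fun h => ⟨LinearMap.ext fun x => ?_, LinearMap.ext fun y => ?_⟩,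
    fun ⟨hf, hg⟩ => hf ▸ hg ▸ rfl⟩
  · simpa [hg, hg₀] using
      congrArg (TensorProduct.rid k H ∘ LinearMap.lTensor H Coalgebra.counit)
        (LinearMap.congr_fun h (x ⊗ₜ 1))
  · simpa [hf, hf₀] using
      congrArg (TensorProduct.lid k H' ∘ LinearMap.rTensor H' Coalgebra.counit)
        (LinearMap.congr_fun h (1 ⊗ₜ y))

theorem hasOrder_map {f : H →ₗ[k] H} {g : H' →ₗ[k] H'} (hf : f 1 = 1) (hg : g 1 = 1)
    {r r' : ℕ} (hfr : HasOrder H f r) (hgr : HasOrder H' g r') :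
    HasOrder (H ⊗[k] H') (map f g) (Nat.lcm r r') := by
  rw [hasOrder_iff] at hfr hgr ⊢
  refine ⟨Nat.lcm_pos hfr.1 hgr.1, fun s => ?_⟩
  rw [Module.End.iterate_eq_id_iff, TensorProduct.map_pow, ← TensorProduct.map_one,
    map_eq_map_iff (by simp [Module.End.pow_apply, Function.iterate_fixed hf]) rfl
      (by simp [Module.End.pow_apply, Function.iterate_fixed hg]) rfl,
    ← Module.End.iterate_eq_id_iff, ← Module.End.iterate_eq_id_iff, hfr.2, hgr.2,
    Nat.lcm_dvd_iff]

end TensorProduct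

section HopfAlgebra

variable {k H : Type*} [CommRing k] [Ring H] [HopfAlgebra k H]
  (hS : Function.Bijective (antipode (R := k) (A := H)))

theorem antipode_antipodeInv (x : H) : antipode k (antipodeInv k H hS x) = x :=
  (LinearEquiv.ofBijective _ hS).apply_symm_apply x

theorem antipodeInv_one : antipodeInv k H hS 1 = 1 :=
  hS.injective (by rw [antipode_antipodeInv, antipode_one])

theorem antipodeInv_mul (x y : H) :
    antipodeInv k H hS (x * y) = antipodeInv k H hS y * antipodeInv k H hS x :=
  hS.injective (by simp only [antipode_antipodeInv, antipode_mul_antidistrib])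

theorem antipodeInv_injective : Function.Injective (antipodeInv k H hS) :=
  (LinearEquiv.ofBijective _ hS).symm.injective

def twistAlgHom (σ : H ≃ₐ[k] H) : H →ₐ[k] H :=
  AlgHom.ofLinearMap (twist k H hS (σ : H →ₗ[k] H)) (by simp [twist, antipodeInv_one])
    (fun x y => by simp [twist, antipodeInv_mul])

theorem toLinearMap_twistAlgHom (σ : H ≃ₐ[k] H) :
    (twistAlgHom hS σ).toLinearMap = twist k H hS (σ : H →ₗ[k] H) := rfl

theorem twistAlgHom_injective (σ : H ≃ₐ[k] H) : Function.Injective (twistAlgHom hS σ) :=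
  (antipodeInv_injective hS).comp ((antipodeInv_injective hS).comp σ.injective)

theorem exists_pos_forall_gamma_twist_eq_convOne_iff_dvd (σ : H ≃ₐ[k] H) {r e : ℕ}
    (hr : 0 < r)
    (he : IsLeast
      {n | 0 < n ∧ gamma k H (twist k H hS (σ : H →ₗ[k] H)) (n * r) = convOne k H} e) :
    ∃ g, 0 < g ∧
      (∀ m, gamma k H (twist k H hS (σ : H →ₗ[k] H)) m = convOne k H ↔ g ∣ m) ∧
      r * e = Nat.lcm g r := by
  obtain ⟨g, hg, hgT⟩ := exists_pos_forall_gamma_eq_convOne_iff_dvd (twistAlgHom hS σ)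
    (twistAlgHom_injective hS σ) ⟨e * r, Nat.mul_pos he.1.1 hr, he.1.2⟩
  rw [toLinearMap_twistAlgHom] at hgT
  refine ⟨g, hg, hgT, Nat.mul_eq_lcm_of_isLeast hg hr ?_⟩
  simpa only [hgT] using he

end HopfAlgebra

end TwistedExponent

/-- Let `H`, `H'` be Hopf algebras over a field `k` with bijective antipodes,
`τ` a Hopf algebra automorphism of `H` of finite order `r` and `τ'` one of `H'` of finite order
`r'`.  Then `γ = τ ⊗ τ'` is a Hopf algebra automorphism of `H ⊗ H'` of order `lcm(r,r')`, and
`exp_γ(H ⊗ H') = lcm(d_τ, d_{τ'}) / lcm(r, r')` where `d_τ = r·exp_τ(H)` and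
`d_{τ'} = r'·exp_{τ'}(H')`.  (On the tensor product Hopf algebra the antipode is `S ⊗ S'`, so
the twist map `(S ⊗ S')⁻² ∘ (τ ⊗ τ')` is `(S⁻²τ) ⊗ (S'⁻²τ')`.)  In particular, if `r = r'`
then `exp_γ(H ⊗ H') = lcm(exp_τ(H), exp_{τ'}(H'))`. -/
theorem stmt12 {k H H' : Type u} [Field k] [Ring H] [HopfAlgebra k H] [Ring H']
    [HopfAlgebra k H']
    (hS : Function.Bijective (HopfAlgebra.antipode (R := k) (A := H)))
    (hS' : Function.Bijective (HopfAlgebra.antipode (R := k) (A := H')))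
    (τ : H ≃ₐc[k] H) (r : ℕ) (hr : HasOrder H (⇑τ) r)
    (τ' : H' ≃ₐc[k] H') (r' : ℕ) (hr' : HasOrder H' (⇑τ') r')
    (e : ℕ) (he : IsLeast {n : ℕ | 0 < n ∧
      gamma k H (twist k H hS (τ : H →ₗ[k] H)) (n * r) = convOne k H} e)
    (e' : ℕ) (he' : IsLeast {n : ℕ | 0 < n ∧
      gamma k H' (twist k H' hS' (τ' : H' →ₗ[k] H')) (n * r') = convOne k H'} e') :
    (∀ x : H ⊗[k] H',
      TensorProduct.map ((τ : H →ₗ[k] H)) ((τ' : H' →ₗ[k] H')) x =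
        Bialgebra.TensorProduct.map τ.toBialgHom τ'.toBialgHom x) ∧
    HasOrder (H ⊗[k] H')
      (⇑(TensorProduct.map ((τ : H →ₗ[k] H)) ((τ' : H' →ₗ[k] H')))) (Nat.lcm r r') ∧
    IsLeast {n : ℕ | 0 < n ∧
      gamma k (H ⊗[k] H')
        (TensorProduct.map (twist k H hS (τ : H →ₗ[k] H))
          (twist k H' hS' (τ' : H' →ₗ[k] H')))
        (n * Nat.lcm r r') = convOne k (H ⊗[k] H')}
      (Nat.lcm (r * e) (r' * e') / Nat.lcm r r') := by
  obtain ⟨g, hg, hgT, hre⟩ :=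
    exists_pos_forall_gamma_twist_eq_convOne_iff_dvd hS τ.toAlgEquiv hr.1 he
  obtain ⟨g', hg', hg'T, hre'⟩ :=
    exists_pos_forall_gamma_twist_eq_convOne_iff_dvd hS' τ'.toAlgEquiv hr'.1 he'
  refine ⟨fun _ => rfl, hasOrder_map (map_one τ) (map_one τ') hr hr', ?_⟩
  have hgamma (m : ℕ) :
      gamma k (H ⊗[k] H') (TensorProduct.map (twist k H hS (τ : H →ₗ[k] H))
        (twist k H' hS' (τ' : H' →ₗ[k] H'))) m = convOne k (H ⊗[k] H') ↔
        Nat.lcm g g' ∣ m := by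
    rw [gamma_map, ← map_convOne_convOne,
      map_eq_map_iff (gamma_apply_one (twistAlgHom hS τ.toAlgEquiv).map_one m) convOne_apply_one
        (gamma_apply_one (twistAlgHom hS' τ'.toAlgEquiv).map_one m) convOne_apply_one,
      hgT, hg'T, Nat.lcm_dvd_iff]
  have hlcm : Nat.lcm (r * e) (r' * e') = Nat.lcm (Nat.lcm g g') (Nat.lcm r r') := by
    rw [hre, hre']
    ac_rfl
  simp only [hgamma, hlcm]
  exact Nat.isLeast_lcm_div (Nat.lcm_pos hg hg') (Nat.lcm_pos hr.1 hr'.1)
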